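/- arXiv:2106.06785 — 3 statements merged into one kernel-verified Lean document; each statement's English description precedes it below -/
import Mathlib

section
/- Let p be a prime and let A be a commutative ring in which p = 0 (i.e., A has characteristic p). Let a and u be units of A and let c ∈ A be arbitrary. Then the quotient A-algebra A[X]/(C c + C a · X^p − C u · X) (in Lean: AdjoinRoot of the polynomial C c + C a * X ^ p − C u * X) is an étale A-algebra. -/
/-!
Up to the unit `a`, the polynomial is the monic `X ^ p - b X + d` with `b = a⁻¹ u`, whose
derivative is the unit `-b` because `p = 0` in `A`. A monic polynomial whose derivative is a unit
modulo itself forms, together with `g = 1`, a standard étale pair, so its `AdjoinRoot` is étale.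
-/

open Polynomial

namespace Polynomial

variable {R : Type*} [CommRing R]

theorem monic_X_pow_sub_C_mul_X_add_C {n : ℕ} (hn : 2 ≤ n) (b d : R) :
    (X ^ n - C b * X + C d).Monic := by
  rw [sub_add]
  refine monic_X_pow_sub ((degree_sub_le _ _).trans_lt (max_lt ?_ ?_))
  · exact (degree_C_mul_X_le b).trans_lt (by exact_mod_cast hn)
  · exact degree_C_le.trans_lt (by exact_mod_cast (by omega : 0 < n))

theorem derivative_X_pow_sub_C_mul_X_add_C (p : ℕ) [CharP R p] (b d : R) :
    derivative (X ^ p - C b * X + C d) = -C b := by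
  simp [derivative_X_pow]

end Polynomial

namespace AdjoinRoot

variable {R : Type*} [CommRing R]

theorem etale_of_monic_of_isUnit_mk_derivative {f : R[X]} (hf : f.Monic)
    (h : IsUnit (mk f (derivative f))) : Algebra.Etale R (AdjoinRoot f) := by
  obtain ⟨d, hd⟩ := h.exists_right_inv
  obtain ⟨q, rfl⟩ := mk_surjective d
  obtain ⟨r, hr⟩ : f ∣ 1 - derivative f * q := by
    rw [← mk_eq_mk, map_mul, hd, map_one]
  let P : StandardEtalePair R := ⟨f, hf, 1, q, r, 1, by rw [← hr]; ring⟩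
  have hroot : P.HasMap (root f) := ⟨by simp [P, aeval_eq], by simp [P]⟩
  exact .of_equiv <| AlgEquiv.ofAlgHom (P.lift _ hroot)
    (liftAlgHom f (Algebra.ofId R _) P.X (by simpa [aeval_def] using P.hasMap_X.1))
    (algHom_ext (by simp)) (P.hom_ext (by simp))

end AdjoinRoot

theorem stmt_1 (p : ℕ) (hp : p.Prime) (A : Type*) [CommRing A] [CharP A p]
    (a u : Aˣ) (c : A) :
    Algebra.Etale A (AdjoinRoot (C c + C (a : A) * X ^ p - C (u : A) * X)) := by
  set b : Aˣ := a⁻¹ * u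
  set g : A[X] := X ^ p - C (b : A) * X + C (↑a⁻¹ * c)
  have hfg : C c + C (a : A) * X ^ p - C (u : A) * X = C (a : A) * g := by
    simp only [g, b, Units.val_mul, mul_add, mul_sub, ← mul_assoc, ← C_mul, Units.mul_inv,
      one_mul]
    ring
  have : Algebra.Etale A (AdjoinRoot g) :=
    AdjoinRoot.etale_of_monic_of_isUnit_mk_derivative
      (monic_X_pow_sub_C_mul_X_add_C hp.two_le _ _)
      (by rw [derivative_X_pow_sub_C_mul_X_add_C p]; exact (b.isUnit.map C).neg.map _)
  rw [hfg]
  exact .of_equiv <| AdjoinRoot.algEquivOfAssociated A _ _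
    (associated_unit_mul_left g _ (a.isUnit.map C)).symm
end

section
/- Let p be a prime and let A be a commutative ring in which p = 0 (i.e., A has characteristic p). Let a and u be units of A and let c ∈ A be arbitrary. Then the quotient A-algebra A[X]/(C c + C a · X^{p²} − C u · X) (in Lean: AdjoinRoot of the polynomial C c + C a * X ^ (p^2) − C u * X) is an étale A-algebra. -/
/-!
In characteristic `p` the term `a X^{p²}` has zero derivative, so `f = c + a X^{p²} - u X` has
derivative `-u`, a unit. A polynomial with unit derivative has unique infinitesimal lifts of its
roots: if `x, y` are roots with `(x - y)² = 0` then `0 = f(x) - f(y) = f'(y)(x - y)`, and a root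
modulo a square-zero ideal is corrected to an honest root by one Newton step `x - f(x) / f'(x)`.
This is exactly formal étaleness of `R[X]/(f)`, which is moreover finitely presented.
-/

open Polynomial

namespace AdjoinRoot

variable {R : Type*} [CommRing R] {f : R[X]} {B : Type*} [CommRing B] [Algebra R B]

lemma eq_of_aeval_eq_zero_of_sq_sub_eq_zero (hf : IsUnit (derivative f)) {x y : B}
    (hx : aeval x f = 0) (hy : aeval y f = 0) (hxy : (x - y) ^ 2 = 0) : x = y := by
  have htaylor := aeval_add_of_sq_eq_zero f y (x - y) hxy
  rw [add_sub_cancel, hx, hy, zero_add, eq_comm] at htaylor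
  exact sub_eq_zero.mp <| ((hf.map (aeval y)).mul_right_eq_zero).mp htaylor

lemma exists_aeval_eq_zero_sub_mem (hf : IsUnit (derivative f)) {I : Ideal B} (hI : I ^ 2 = ⊥)
    {x : B} (hx : aeval x f ∈ I) : ∃ y, aeval y f = 0 ∧ y - x ∈ I := by
  obtain ⟨v, hv⟩ := hf.map (aeval x)
  set h : B := -(↑v⁻¹ * aeval x f)
  have hhI : h ∈ I := I.neg_mem (I.mul_mem_left _ hx)
  have hh : h ^ 2 = 0 := by simpa [hI] using Ideal.pow_mem_pow hhI 2
  refine ⟨x + h, ?_, by rwa [add_sub_cancel_left]⟩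
  rw [aeval_add_of_sq_eq_zero f x h hh, ← hv]
  simp [h]

theorem formallyEtale_of_isUnit_derivative (hf : IsUnit (derivative f)) :
    Algebra.FormallyEtale R (AdjoinRoot f) := by
  rw [Algebra.FormallyEtale.iff_comp_bijective]
  intro B _ _ I hI
  constructor
  · intro φ ψ hφψ
    have hmem : φ (root f) - ψ (root f) ∈ I :=
      Ideal.Quotient.eq.mp (congrArg (fun g ↦ g (root f)) hφψ)
    refine algHom_ext (eq_of_aeval_eq_zero_of_sq_sub_eq_zero hf (aeval_algHom_eq_zero f φ)
      (aeval_algHom_eq_zero f ψ) ?_)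
    simpa [hI] using Ideal.pow_mem_pow hmem 2
  · intro g
    obtain ⟨x, hx⟩ := Ideal.Quotient.mk_surjective (g (root f))
    have hxI : aeval x f ∈ I := by
      rw [← Ideal.Quotient.eq_zero_iff_mem, ← Ideal.Quotient.mkₐ_eq_mk R, ← aeval_algHom_apply,
        Ideal.Quotient.mkₐ_eq_mk, hx]
      exact aeval_algHom_eq_zero f g
    obtain ⟨y, hy, hyx⟩ := exists_aeval_eq_zero_sub_mem hf hI hxI
    refine ⟨liftAlgHom f (Algebra.ofId R B) y (by rw [← hy, aeval_def]; rfl), algHom_ext ?_⟩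
    rw [AlgHom.comp_apply, liftAlgHom_root, Ideal.Quotient.mkₐ_eq_mk, ← hx]
    exact Ideal.Quotient.eq.mpr hyx

theorem etale_of_isUnit_derivative (hf : IsUnit (derivative f)) :
    Algebra.Etale R (AdjoinRoot f) :=
  ⟨formallyEtale_of_isUnit_derivative hf, finitePresentation f⟩

end AdjoinRoot

lemma derivative_C_add_C_mul_X_pow_sq_sub_C_mul_X {A : Type*} [CommRing A] (p : ℕ) [CharP A p]
    (a u c : A) : derivative (C c + C a * X ^ (p ^ 2) - C u * X) = -C u := by
  have hp : ((p ^ 2 : ℕ) : A) = 0 := by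
    rw [Nat.cast_pow, CharP.cast_eq_zero, zero_pow two_ne_zero]
  simp [derivative_X_pow, hp]

theorem stmt_2_general (p : ℕ) (A : Type*) [CommRing A] [CharP A p]
    (a u : Aˣ) (c : A) :
    Algebra.Etale A (AdjoinRoot (C c + C (a : A) * X ^ (p ^ 2) - C (u : A) * X)) := by
  apply AdjoinRoot.etale_of_isUnit_derivative
  rw [derivative_C_add_C_mul_X_pow_sq_sub_C_mul_X p]
  exact (isUnit_C.mpr u.isUnit).neg

theorem stmt_2 (p : ℕ) (hp : p.Prime) (A : Type*) [CommRing A] [CharP A p]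
    (a u : Aˣ) (c : A) :
    Algebra.Etale A (AdjoinRoot (C c + C (a : A) * X ^ (p ^ 2) - C (u : A) * X)) :=
  stmt_2_general p A a u c
end

section
/- Fix a prime p. Define d₂ : ℕ → ℤ by d₂(n) = 2pⁿ − 1 for n ∈ {1, 2, 3} and d₂(n) = 2p³·(p^{n−3} − p^{n−4}) + d₂(n−3) for n ≥ 4, and for n ≥ 1, writing n = 3q + j with j ∈ {1, 2, 3}, define r₂(n) = ∑_{k=0}^{q} p^{n−3k} (so r₂(n) = pⁿ + p^{n−3} + ⋯ + p^j). Then for every n ≥ 1 one has 2·p^{n+2} − d₂(n) − 1 = (2p² − 2)·r₂(n). -/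
/-!
Put `e n = 2 p^(n+2) - d₂ n - 1`. The recurrence for `d₂` becomes
`e (n + 3) = (2 p² - 2) p^(n+3) + e n`, and the base values are `e j = (2 p² - 2) p^j`,
so `e (3q + j)` telescopes to `(2 p² - 2) (p^(3q+j) + p^(3q+j-3) + ⋯ + p^j)`.
-/

theorem Finset.sum_range_succ_pow_add_three_sub {R : Type*} [CommSemiring R] (x : R) (n q : ℕ) :
    ∑ k ∈ Finset.range (q + 1), x ^ (n + 3 - 3 * k) =
      x ^ (n + 3) + ∑ k ∈ Finset.range q, x ^ (n - 3 * k) := by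
  rw [Finset.sum_range_succ', add_comm]
  congr 1
  exact Finset.sum_congr rfl fun k _ => by congr 1; omega

theorem eq_mul_sum_pow_of_add_three {R : Type*} [CommSemiring R] (x c : R) (e : ℕ → R)
    {j : ℕ} (hj : 1 ≤ j) (hbase : e j = c * x ^ j)
    (hstep : ∀ n, 1 ≤ n → e (n + 3) = c * x ^ (n + 3) + e n) (q : ℕ) :
    e (3 * q + j) = c * ∑ k ∈ Finset.range (q + 1), x ^ (3 * q + j - 3 * k) := by
  induction q with
  | zero => simp [hbase]
  | succ q ih =>
    rw [show 3 * (q + 1) + j = 3 * q + j + 3 by ring, hstep _ (by omega), ih,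
      Finset.sum_range_succ_pow_add_three_sub, mul_add]

theorem stmt_7_general (p : ℕ) (d₂ : ℕ → ℤ)
    (hbase : ∀ n : ℕ, n = 1 ∨ n = 2 ∨ n = 3 → d₂ n = 2 * (p : ℤ) ^ n - 1)
    (hrec : ∀ n : ℕ, 4 ≤ n →
      d₂ n = 2 * (p : ℤ) ^ 3 * ((p : ℤ) ^ (n - 3) - (p : ℤ) ^ (n - 4)) + d₂ (n - 3)) :
    ∀ n : ℕ, 1 ≤ n → ∀ q j : ℕ, 1 ≤ j → j ≤ 3 → n = 3 * q + j →
      2 * (p : ℤ) ^ (n + 2) - d₂ n - 1 =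
        (2 * (p : ℤ) ^ 2 - 2) * ∑ k ∈ Finset.range (q + 1), (p : ℤ) ^ (n - 3 * k) := by
  intro n _ q j hj1 hj3 rfl
  refine eq_mul_sum_pow_of_add_three (p : ℤ) _ (fun n => 2 * (p : ℤ) ^ (n + 2) - d₂ n - 1)
    hj1 ?_ ?_ q
  · rw [hbase j (by omega)]
    ring
  · rintro (_ | m) hm
    · omega
    rw [hrec _ (by omega), show m + 1 + 3 - 3 = m + 1 by omega, show m + 1 + 3 - 4 = m by omega]
    ring

theorem stmt_7 (p : ℕ) (hp : p.Prime) (d₂ : ℕ → ℤ)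
    (hbase : ∀ n : ℕ, n = 1 ∨ n = 2 ∨ n = 3 → d₂ n = 2 * (p : ℤ) ^ n - 1)
    (hrec : ∀ n : ℕ, 4 ≤ n →
      d₂ n = 2 * (p : ℤ) ^ 3 * ((p : ℤ) ^ (n - 3) - (p : ℤ) ^ (n - 4)) + d₂ (n - 3)) :
    ∀ n : ℕ, 1 ≤ n → ∀ q j : ℕ, 1 ≤ j → j ≤ 3 → n = 3 * q + j →
      2 * (p : ℤ) ^ (n + 2) - d₂ n - 1 =
        (2 * (p : ℤ) ^ 2 - 2) * ∑ k ∈ Finset.range (q + 1), (p : ℤ) ^ (n - 3 * k) :=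
  stmt_7_general p d₂ hbase hrec
end
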